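/- arXiv:1701.08926 — 14 statements merged into one kernel-verified Lean document; each statement's English description precedes it below -/
import Mathlib

section
/- Let T > 0 and let m, v0, c be real numbers. Consider the complex polynomial p(ω) = T(ω + m v0)² + i(ω + m v0) − i c m in the complex variable ω, arising from the linearization of Phillips' second-order traffic model about an equilibrium state (with c = k0·η'(k0) and m the wavenumber of a monochromatic perturbation e^{i(mx − ωt)}). Then p has a complex root ω with Im(ω) ≥ 0; moreover, if c·m ≠ 0, then p has a complex root ω with Im(ω) > 0. In particular Phillips' model is never linearly stable, since stability requires every root to have strictly negative imaginary part. -/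
/-!
Write `z = ω + m v0` and `d = c m`; the real shift does not change imaginary parts, so we need a
root of `T z² + i z − i d` in the closed (open) upper half-plane. By the quadratic formula the roots
are `z = (−i ± w) / 2T` with `w² = −1 + 4Tdi`, and we may choose `Im w ≥ 0`. Comparing real parts,
`(Im w)² = 1 + (Re w)² ≥ 1`, so `Im w ≥ 1` and `Im z = (Im w − 1) / 2T ≥ 0`. If `d ≠ 0` the imaginary
part `2 Re w Im w = 4Td` forces `Re w ≠ 0`, hence `Im w > 1` and `Im z > 0`.
-/

open Complex

lemma Complex.exists_eq_mul_self_im_nonneg (z : ℂ) : ∃ w : ℂ, z = w * w ∧ 0 ≤ w.im := by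
  obtain ⟨w, hw⟩ := IsAlgClosed.exists_eq_mul_self z
  rcases le_total 0 w.im with him | him
  · exact ⟨w, hw, him⟩
  · exact ⟨-w, by rw [hw, neg_mul_neg], by simpa using him⟩

lemma Complex.one_le_im_of_neg_one_add_mul_I_eq_mul_self {w : ℂ} {r : ℝ}
    (hw : -1 + r * I = w * w) (him : 0 ≤ w.im) : 1 ≤ w.im ∧ (r ≠ 0 → 1 < w.im) := by
  have hre : w.im ^ 2 = 1 + w.re ^ 2 := by
    have := congrArg re hw
    simp only [add_re, neg_re, one_re, mul_re, ofReal_re, ofReal_im, I_re, I_im] at this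
    linarith
  have hr : r = 2 * w.re * w.im := by
    have := congrArg im hw
    simp only [add_im, neg_im, one_im, mul_im, ofReal_re, ofReal_im, I_re, I_im] at this
    linarith
  refine ⟨by nlinarith [sq_nonneg w.re], fun hr0 => ?_⟩
  have hre0 : w.re ≠ 0 := fun h => hr0 (by simp [hr, h])
  nlinarith [sq_pos_of_ne_zero hre0]

theorem exists_root_im_nonneg_of_relaxation_quadratic (T d : ℝ) (hT : 0 < T) :
    ∃ z : ℂ, T * z ^ 2 + I * z - I * d = 0 ∧ 0 ≤ z.im ∧ (d ≠ 0 → 0 < z.im) := by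
  obtain ⟨w, hw, him⟩ := exists_eq_mul_self_im_nonneg (-1 + ↑(4 * T * d) * I)
  obtain ⟨hw_im, hw_im_of_ne⟩ := one_le_im_of_neg_one_add_mul_I_eq_mul_self hw him
  have hT0 : (T : ℂ) ≠ 0 := ofReal_ne_zero.mpr hT.ne'
  have hdiscrim : discrim (T : ℂ) I (-(I * d)) = w * w := by
    rw [discrim, ← hw]; push_cast; linear_combination I_sq
  have hroot := (quadratic_eq_zero_iff hT0 hdiscrim ((-I + w) / (2 * T))).mpr (Or.inl rfl)
  have hzim : ((-I + w) / (2 * T)).im = (w.im - 1) / (2 * T) := by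
    rw [show (2 * T : ℂ) = ↑(2 * T) by push_cast; ring, div_ofReal_im]
    simp only [add_im, neg_im, I_im]
    ring
  refine ⟨(-I + w) / (2 * T), by linear_combination hroot, ?_, fun hd => ?_⟩
  · rw [hzim]; exact div_nonneg (by linarith) (by positivity)
  · have := hw_im_of_ne (by positivity)
    rw [hzim]; exact div_pos (by linarith) (by positivity)

/-- Instability of the linearized Phillips model: the dispersion polynomial
`p(ω) = T(ω + m v0)² + i(ω + m v0) − i c m` always has a root with nonnegative
imaginary part, and a root with strictly positive imaginary part when `c·m ≠ 0`.
Hence Phillips' model is never linearly stable. -/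
theorem phillips_linearly_unstable (T m v0 c : ℝ) (hT : 0 < T) :
    (∃ ω : ℂ, (T : ℂ) * (ω + (m : ℂ) * (v0 : ℂ)) ^ 2
        + Complex.I * (ω + (m : ℂ) * (v0 : ℂ)) - Complex.I * (c : ℂ) * (m : ℂ) = 0
      ∧ 0 ≤ ω.im) ∧
    (c * m ≠ 0 →
      ∃ ω : ℂ, (T : ℂ) * (ω + (m : ℂ) * (v0 : ℂ)) ^ 2
          + Complex.I * (ω + (m : ℂ) * (v0 : ℂ)) - Complex.I * (c : ℂ) * (m : ℂ) = 0
        ∧ 0 < ω.im) := by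
  obtain ⟨z, hroot, hnonneg, hpos⟩ := exists_root_im_nonneg_of_relaxation_quadratic T (c * m) hT
  have hshift : z - m * v0 + m * v0 = z := sub_add_cancel _ _
  have hroot' : (T : ℂ) * (z - m * v0 + m * v0) ^ 2 + I * (z - m * v0 + m * v0)
      - I * c * m = 0 := by
    rw [hshift, ← hroot]; push_cast; ring
  have him : (z - m * v0).im = z.im := by simp
  exact ⟨⟨_, hroot', him ▸ hnonneg⟩, fun hcm => ⟨_, hroot', him ▸ hpos hcm⟩⟩
end

section
/- Let T > 0, a > 0 and ω ∈ ℝ. Then the limit as Δ → 0⁺ of |a / (a − T ω² Δ + i ω Δ)|^{1/Δ} exists and equals exp(T ω² / a), where | · | denotes the complex modulus. Consequently, if ω ≠ 0, this limit is strictly greater than 1: in Phillips' car-following model with relaxation time T, the per-vehicle amplification factor of a monochromatic speed disturbance of frequency ω equals e^{Tω²/θ'(s0)} > 1, so the model is string unstable. -/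
/-!
Since `Δ ↦ |a / (a - Tω²Δ + iωΔ)|` equals `1` at `Δ = 0` with derivative `Tω²/a` there,
its logarithm divided by `Δ` is a difference quotient tending to `Tω²/a`; exponentiating
gives the limit `exp (Tω²/a)`.
-/

open Filter Topology Real

theorem tendsto_rpow_one_div_nhdsNE_of_hasDerivAt {f : ℝ → ℝ} {L : ℝ} (hf : HasDerivAt f L 0)
    (h0 : f 0 = 1) : Tendsto (fun x => f x ^ (1 / x)) (𝓝[≠] 0) (𝓝 (exp L)) := by
  have hlog : HasDerivAt (fun x => log (f x)) L 0 := by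
    simpa [h0] using hf.log (by simp [h0])
  have hpos : ∀ᶠ x in 𝓝[≠] 0, 0 < f x :=
    nhdsWithin_le_nhds (hf.continuousAt.eventually (lt_mem_nhds (by simp [h0])))
  refine ((continuous_exp.tendsto L).comp (hasDerivAt_iff_tendsto_slope.mp hlog)).congr' ?_
  filter_upwards [hpos] with x hx
  simp [rpow_def_of_pos hx, slope, h0, div_eq_inv_mul, mul_comm]

theorem Complex.norm_ofReal_div_add_mul_I (a x y : ℝ) :
    ‖(a : ℂ) / ((x : ℂ) + (y : ℂ) * Complex.I)‖ = |a| / √(x ^ 2 + y ^ 2) := by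
  rw [norm_div, Complex.norm_add_mul_I, Complex.norm_real, Real.norm_eq_abs]

theorem hasDerivAt_div_sqrt_sq_add_sq {a : ℝ} (ha : 0 < a) (b c : ℝ) :
    HasDerivAt (fun Δ => a / √((a - b * Δ) ^ 2 + (c * Δ) ^ 2)) (b / a) 0 := by
  have hq : HasDerivAt (fun Δ : ℝ => (a - b * Δ) ^ 2 + (c * Δ) ^ 2) (-(2 * a * b)) 0 := by
    have h1 := ((hasDerivAt_id (0 : ℝ)).const_mul b).const_sub a
    have h2 := (hasDerivAt_id (0 : ℝ)).const_mul c
    refine ((h1.pow 2).add (h2.pow 2)).congr_deriv ?_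
    simp
  have hq0 : (a - b * 0) ^ 2 + (c * 0) ^ 2 = a ^ 2 := by ring
  have hsqrt := hq.sqrt (by rw [hq0]; positivity)
  refine ((hasDerivAt_const (0 : ℝ) a).div hsqrt
    (by rw [hq0, sqrt_sq ha.le]; exact ha.ne')).congr_deriv ?_
  rw [hq0, sqrt_sq ha.le]
  field_simp
  ring

/-- String instability of Phillips' car-following model: the per-unit-vehicle
amplification factor `lim_{Δ→0⁺} |a/(a − Tω²Δ + iωΔ)|^{1/Δ}` equals `exp(Tω²/a)`,
which exceeds 1 whenever `ω ≠ 0`. -/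
theorem phillips_string_unstable (T a ω : ℝ) (hT : 0 < T) (ha : 0 < a) :
    Filter.Tendsto
      (fun Δ : ℝ =>
        (‖(a : ℂ) /
          (((a - T * ω ^ 2 * Δ : ℝ) : ℂ) + ((ω * Δ : ℝ) : ℂ) * Complex.I)‖) ^ (1 / Δ))
      (nhdsWithin 0 (Set.Ioi 0)) (nhds (Real.exp (T * ω ^ 2 / a))) ∧
    (ω ≠ 0 → 1 < Real.exp (T * ω ^ 2 / a)) := by
  refine ⟨?_, fun hω => one_lt_exp_iff.mpr (by positivity)⟩
  have hlim := tendsto_rpow_one_div_nhdsNE_of_hasDerivAt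
    (hasDerivAt_div_sqrt_sq_add_sq ha (T * ω ^ 2) ω) (by simp [ha.ne', sqrt_sq ha.le])
  refine (hlim.mono_left (nhdsGT_le_nhdsNE 0)).congr fun Δ => ?_
  rw [Complex.norm_ofReal_div_add_mul_I, abs_of_pos ha]
end

section
/- Let T > 0, a > 0 and ω ∈ ℝ with ω ≠ 0. Then for every Δ with 0 < Δ < 2aT/(T²ω² + 1), the complex modulus satisfies |a / (a − T ω² Δ + i ω Δ)| > 1. That is, at each finite vehicle-discretization step Δ below the explicit threshold 2aT/(T²ω²+1), the one-step amplification factor of a frequency-ω disturbance in Phillips' car-following model strictly exceeds 1. -/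
open Complex

/-- The bracket is positive exactly when `Δ` lies below the threshold `2aT/(T²ω² + 1)`. -/
theorem normSq_phillips_denominator (T a ω Δ : ℝ) :
    normSq (((a - T * ω ^ 2 * Δ : ℝ) : ℂ) + ((ω * Δ : ℝ) : ℂ) * I) =
      a ^ 2 - ω ^ 2 * Δ * (2 * a * T - Δ * (T ^ 2 * ω ^ 2 + 1)) := by
  rw [normSq_add_mul_I]
  ring

theorem one_lt_norm_div_of_normSq_lt {w z : ℂ} (hz : z ≠ 0) (h : normSq z < normSq w) :
    1 < ‖w / z‖ := by
  rw [norm_div, one_lt_div (norm_pos_iff.2 hz)]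
  rw [normSq_eq_norm_sq, normSq_eq_norm_sq] at h
  exact lt_of_pow_lt_pow_left₀ 2 (norm_nonneg w) h

theorem phillips_one_step_amplification_general (T a ω : ℝ) (hω : ω ≠ 0) :
    ∀ Δ : ℝ, 0 < Δ → Δ < 2 * a * T / (T ^ 2 * ω ^ 2 + 1) →
      1 < ‖((a : ℂ) /
        (((a - T * ω ^ 2 * Δ : ℝ) : ℂ) + ((ω * Δ : ℝ) : ℂ) * Complex.I))‖ := by
  intro Δ hΔ hlt
  have hgap : 0 < 2 * a * T - Δ * (T ^ 2 * ω ^ 2 + 1) := by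
    rw [lt_div_iff₀ (by positivity)] at hlt
    linarith
  have hz : ((a - T * ω ^ 2 * Δ : ℝ) : ℂ) + ((ω * Δ : ℝ) : ℂ) * I ≠ 0 := fun h =>
    mul_ne_zero hω hΔ.ne' <| by
      simpa only [add_im, ofReal_im, mul_I_im, ofReal_re, zero_add, zero_im] using congrArg im h
  refine one_lt_norm_div_of_normSq_lt hz ?_
  rw [normSq_phillips_denominator, normSq_ofReal, ← sq]
  have hdeficit : 0 < ω ^ 2 * Δ * (2 * a * T - Δ * (T ^ 2 * ω ^ 2 + 1)) := by positivity
  linarith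

/-- At every finite vehicle-discretization step `Δ` below the threshold
`2aT/(T²ω² + 1)`, the one-step amplification factor of a frequency-`ω`
disturbance in Phillips' car-following model strictly exceeds 1. -/
theorem phillips_one_step_amplification (T a ω : ℝ) (hT : 0 < T) (ha : 0 < a) (hω : ω ≠ 0) :
    ∀ Δ : ℝ, 0 < Δ → Δ < 2 * a * T / (T ^ 2 * ω ^ 2 + 1) →
      1 < ‖((a : ℂ) /
        (((a - T * ω ^ 2 * Δ : ℝ) : ℂ) + ((ω * Δ : ℝ) : ℂ) * Complex.I))‖ :=
  phillips_one_step_amplification_general T a ω hω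
end

section
/- Let a > 0 and ω ∈ ℝ. Then the limit as Δ → 0⁺ of |a / (a − ω² Δ² + i ω Δ)|^{1/Δ} exists and equals 1, where | · | denotes the complex modulus. That is, in the nonstandard car-following model, in which the relaxation time equals the vehicle-discretization step, a small monochromatic disturbance in a leading vehicle's speed is not amplified along the traffic stream: the per-unit-vehicle amplification factor is exactly 1, so the model is linearly (string) stable. -/
/-!
If `g 0 = 1` and `g` is differentiable at `0`, then `g Δ ^ (1 / Δ) = exp (log (g Δ) / Δ)` tends to
`exp (g' 0)`. The modulus of the amplification ratio is `a / √p(Δ)` with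
`p(Δ) = (a - ω²Δ²)² + ω²Δ² = a² + O(Δ²)`, so it equals `1` and is stationary at `Δ = 0`: the
per-unit-vehicle amplification is `exp 0 = 1`.
-/

open Real Filter Topology

theorem tendsto_rpow_one_div_of_hasDerivAt {g : ℝ → ℝ} {c : ℝ} (hg0 : g 0 = 1)
    (hg : HasDerivAt g c 0) :
    Tendsto (fun Δ => g Δ ^ (1 / Δ)) (𝓝[≠] 0) (𝓝 (exp c)) := by
  have hlog : HasDerivAt (fun Δ => log (g Δ)) c 0 := by
    simpa [hg0] using hg.log (by simp [hg0])
  have hslope : Tendsto (fun Δ => log (g Δ) * (1 / Δ)) (𝓝[≠] 0) (𝓝 c) := by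
    refine (hasDerivAt_iff_tendsto_slope.mp hlog).congr fun Δ => ?_
    rw [slope_def_field, hg0, log_one, sub_zero, sub_zero, mul_one_div]
  have hpos : ∀ᶠ Δ in 𝓝[≠] 0, 0 < g Δ :=
    (hg.continuousAt.eventually (eventually_gt_nhds (by simp [hg0]))).filter_mono
      nhdsWithin_le_nhds
  refine ((continuous_exp.tendsto c).comp hslope).congr' ?_
  filter_upwards [hpos] with Δ hΔ
  simp [rpow_def_of_pos hΔ]

theorem hasDerivAt_normSq_amplification_denominator (a ω : ℝ) :
    HasDerivAt (fun Δ : ℝ => (a - ω ^ 2 * Δ ^ 2) ^ 2 + (ω * Δ) ^ 2) 0 0 := by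
  have hid := hasDerivAt_id' (0 : ℝ)
  simpa using (((hid.fun_pow 2).const_mul (ω ^ 2)).const_sub a).fun_pow 2
    |>.fun_add ((hid.const_mul ω).fun_pow 2)

theorem norm_amplification_eq (a ω Δ : ℝ) (ha : 0 ≤ a) :
    ‖(a : ℂ) / (((a - ω ^ 2 * Δ ^ 2 : ℝ) : ℂ) + ((ω * Δ : ℝ) : ℂ) * Complex.I)‖ =
      a / √((a - ω ^ 2 * Δ ^ 2) ^ 2 + (ω * Δ) ^ 2) := by
  rw [norm_div, Complex.norm_real, norm_of_nonneg ha, Complex.norm_add_mul_I]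

theorem hasDerivAt_norm_amplification {a : ℝ} (ω : ℝ) (ha : 0 < a) :
    HasDerivAt (fun Δ : ℝ => a / √((a - ω ^ 2 * Δ ^ 2) ^ 2 + (ω * Δ) ^ 2)) 0 0 := by
  have hp0 : 0 < (a - ω ^ 2 * 0 ^ 2) ^ 2 + (ω * 0) ^ 2 := by simp; positivity
  have hsqrt := (hasDerivAt_normSq_amplification_denominator a ω).sqrt hp0.ne'
  simpa using (hasDerivAt_const (0 : ℝ) a).fun_div hsqrt (sqrt_ne_zero'.mpr hp0)

/-- Linear (string) stability of the nonstandard car-following model, in which the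
relaxation time equals the vehicle-discretization step: the per-unit-vehicle
amplification factor `lim_{Δ→0⁺} |a/(a − ω²Δ² + iωΔ)|^{1/Δ}` is exactly 1. -/
theorem nonstandard_model_string_stable (a ω : ℝ) (ha : 0 < a) :
    Filter.Tendsto
      (fun Δ : ℝ =>
        (‖(a : ℂ) /
          (((a - ω ^ 2 * Δ ^ 2 : ℝ) : ℂ) + ((ω * Δ : ℝ) : ℂ) * Complex.I)‖) ^ (1 / Δ))
      (nhdsWithin 0 (Set.Ioi 0)) (nhds 1) := by
  simp_rw [norm_amplification_eq a ω _ ha.le]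
  have h := tendsto_rpow_one_div_of_hasDerivAt (by simp [sqrt_sq ha.le, ha.ne'])
    (hasDerivAt_norm_amplification ω ha)
  rw [exp_zero] at h
  exact h.mono_left (nhdsWithin_mono 0 fun _ hΔ => ne_of_gt hΔ)
end

section
/- Let K > 0, S = 1/K, and let η : ℝ → ℝ satisfy η(k) ≥ 0 for all k ∈ (0, K] and η(K) = 0. Let Δt, ΔN > 0 satisfy the collision-free condition: k·η(k) ≤ (ΔN/Δt)·(1 − k/K) for all k ∈ (0, K). Suppose vehicle positions x : ℕ → ℝ (vehicle n−1 is the leader of vehicle n) satisfy x(n−1) − x(n) ≥ S·ΔN for all n ≥ 1, and the updated positions are y(n) = x(n) + Δt·η(ΔN/(x(n−1) − x(n))) for n ≥ 1, with the lead vehicle satisfying y(0) ≥ x(0). Then y(n−1) − y(n) ≥ S·ΔN for all n ≥ 1; i.e., the Godunov/car-following discretization of the LWR model remains collision-free after one time step. -/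
/-! Writing `k = ΔN / s` for the density seen by a vehicle at spacing `s ≥ ΔN / K`, the
collision-free condition is equivalent to `Δt · η(k) ≤ ΔN / k − ΔN / K = s − S·ΔN`: no vehicle
advances by more than its spacing in excess of the jam spacing. Since every leader moves forward,
each new spacing is still at least the jam spacing. -/

open Set

section CollisionFree

variable {K ΔN Δt : ℝ} {η : ℝ → ℝ}

theorem div_mem_Ioc_of_div_le (hK : 0 < K) (hΔN : 0 < ΔN) {s : ℝ} (hs : ΔN / K ≤ s) :
    ΔN / s ∈ Ioc 0 K := by
  have hs₀ : 0 < s := (div_pos hΔN hK).trans_le hs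
  refine ⟨div_pos hΔN hs₀, ?_⟩
  rw [div_le_iff₀ hs₀]
  rw [div_le_iff₀ hK] at hs
  linarith

theorem mul_le_div_sub_div_of_collisionFree (hΔt : 0 < Δt) (hηK : η K = 0)
    (hcf : ∀ k ∈ Ioo (0 : ℝ) K, k * η k ≤ (ΔN / Δt) * (1 - k / K))
    {k : ℝ} (hk : k ∈ Ioc 0 K) : Δt * η k ≤ ΔN / k - ΔN / K := by
  obtain ⟨hk₀, hkK⟩ := hk
  rcases hkK.eq_or_lt with rfl | hkK
  · simp [hηK]
  · have h := hcf k ⟨hk₀, hkK⟩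
    have hK : 0 < K := hk₀.trans hkK
    calc Δt * η k = Δt / k * (k * η k) := by field_simp
      _ ≤ Δt / k * ((ΔN / Δt) * (1 - k / K)) := by gcongr
      _ = ΔN / k - ΔN / K := by field_simp

theorem mul_le_sub_div_of_collisionFree (hK : 0 < K) (hΔN : 0 < ΔN) (hΔt : 0 < Δt)
    (hηK : η K = 0) (hcf : ∀ k ∈ Ioo (0 : ℝ) K, k * η k ≤ (ΔN / Δt) * (1 - k / K))
    {s : ℝ} (hs : ΔN / K ≤ s) : Δt * η (ΔN / s) ≤ s - ΔN / K := by
  have h := mul_le_div_sub_div_of_collisionFree hΔt hηK hcf (div_mem_Ioc_of_div_le hK hΔN hs)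
  rwa [div_div_cancel₀ hΔN.ne'] at h

end CollisionFree

/-- Sufficiency of the collision-free condition: under
`k·η(k) ≤ (ΔN/Δt)·(1 − k/K)` for all `k ∈ (0,K)`, the Godunov/car-following
discretization of the LWR model remains collision-free after one time step. -/
theorem collision_free_sufficient (K S ΔN Δt : ℝ) (hK : 0 < K) (hS : S = 1 / K)
    (hΔN : 0 < ΔN) (hΔt : 0 < Δt) (η : ℝ → ℝ)
    (hη : ∀ k ∈ Set.Ioc (0 : ℝ) K, 0 ≤ η k) (hηK : η K = 0)
    (hcf : ∀ k ∈ Set.Ioo (0 : ℝ) K, k * η k ≤ (ΔN / Δt) * (1 - k / K))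
    (x y : ℕ → ℝ)
    (hx : ∀ n : ℕ, 1 ≤ n → x (n - 1) - x n ≥ S * ΔN)
    (hy : ∀ n : ℕ, 1 ≤ n → y n = x n + Δt * η (ΔN / (x (n - 1) - x n)))
    (hy0 : y 0 ≥ x 0) :
    ∀ n : ℕ, 1 ≤ n → y (n - 1) - y n ≥ S * ΔN := by
  have hjam : S * ΔN = ΔN / K := by rw [hS, one_div_mul_eq_div]
  have hforward : ∀ m, x m ≤ y m := by
    rintro (_ | m)
    · exact hy0
    · have hspacing := hjam ▸ hx (m + 1) (Nat.le_add_left 1 m)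
      have hv := hη _ (div_mem_Ioc_of_div_le hK hΔN hspacing)
      rw [hy (m + 1) (Nat.le_add_left 1 m)]
      linarith [mul_nonneg hΔt.le hv]
  intro n hn
  have hstep := mul_le_sub_div_of_collisionFree hK hΔN hΔt hηK hcf (hjam ▸ hx n hn)
  linarith [hforward (n - 1), hy n hn]
end

section
/- Let K > 0, S = 1/K, and let η : ℝ → ℝ satisfy η(k) ≥ 0 for all k ∈ (0, K]. Let Δt, ΔN > 0 and suppose the collision-free condition fails: there exists k0 ∈ (0, K) with k0·η(k0) > (ΔN/Δt)·(1 − k0/K). Then there is a collision after one step behind a stopped leader: setting the spacing s = ΔN/k0, we have s ≥ S·ΔN, yet the updated spacing satisfies s − Δt·η(ΔN/s) < S·ΔN. Hence the condition ΔN/Δt ≥ max_{k∈[0,K]} k·η(k)/(1 − k/K) is necessary for the discrete car-following model of the LWR model to be collision-free. -/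
/-- Necessity of the collision-free condition: if it fails at some density
`k0 ∈ (0,K)`, then a follower at spacing `s = ΔN/k0` behind a stopped leader,
while initially at least the jam spacing away, ends up closer than the jam
spacing after one step. -/
theorem collision_free_necessary (K S ΔN Δt : ℝ) (hK : 0 < K) (hS : S = 1 / K)
    (hΔN : 0 < ΔN) (hΔt : 0 < Δt) (η : ℝ → ℝ)
    (hη : ∀ k ∈ Set.Ioc (0 : ℝ) K, 0 ≤ η k)
    (k0 : ℝ) (hk0 : k0 ∈ Set.Ioo (0 : ℝ) K)
    (hfail : k0 * η k0 > (ΔN / Δt) * (1 - k0 / K)) :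
    ΔN / k0 ≥ S * ΔN ∧ ΔN / k0 - Δt * η (ΔN / (ΔN / k0)) < S * ΔN := by
  obtain ⟨hk0pos, hk0K⟩ := hk0
  have harg : ΔN / (ΔN / k0) = k0 := by field_simp
  rw [harg, hS]
  constructor
  · rw [ge_iff_le, div_mul_eq_mul_div, div_le_div_iff₀ hK hk0pos]
    nlinarith
  · rw [gt_iff_lt, div_mul_eq_mul_div, div_lt_iff₀ hΔt] at hfail
    rw [sub_lt_iff_lt_add, div_lt_iff₀ hk0pos]
    have hKk : ΔN * (1 - k0 / K) < k0 * η k0 * Δt := hfail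
    have h2 : ΔN * (k0 / K) = 1 / K * ΔN * k0 := by ring
    nlinarith
end

section
/- Let K > 0 and let η : ℝ → ℝ be twice differentiable on [0, K] with η(K) = 0 and k·η''(k) + 2·η'(k) ≤ 0 for all k ∈ [0, K]. Then (K − k)·k·η'(k) + K·η(k) ≥ 0 for all k ∈ [0, K]. -/
/-!
The flow `φ(x) = x * η x` has `φ' = η + x η'` and `φ'' = x η'' + 2 η' ≤ 0`, so `φ` is concave on
`[0, K]`. Its chord from `k` to `K` therefore lies below its tangent at `k`:
`(φ K - φ k) / (K - k) ≤ φ' k`. Since `φ K = 0`, clearing the denominator is the claim.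
-/

open Set

theorem HasDerivWithinAt.id_mul {𝕜 : Type*} [NontriviallyNormedField 𝕜] {f : 𝕜 → 𝕜} {f' x : 𝕜}
    {s : Set 𝕜} (hf : HasDerivWithinAt f f' s x) :
    HasDerivWithinAt (fun y => y * f y) (f x + x * f') s x :=
  ((hasDerivWithinAt_id x s).mul hf).congr_deriv (by simp)

theorem concaveOn_id_mul_of_hasDerivWithinAt {s : Set ℝ} (hs : Convex ℝ s) {η η' η'' : ℝ → ℝ}
    (hd1 : ∀ x ∈ s, HasDerivWithinAt η (η' x) s x)
    (hd2 : ∀ x ∈ s, HasDerivWithinAt η' (η'' x) s x)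
    (hconc : ∀ x ∈ s, x * η'' x + 2 * η' x ≤ 0) :
    ConcaveOn ℝ s (fun x => x * η x) := by
  refine concaveOn_of_hasDerivWithinAt2_nonpos hs (f' := fun x => η x + x * η' x)
    (f'' := fun x => x * η'' x + 2 * η' x)
    (fun x hx => (hd1 x hx).id_mul.continuousWithinAt)
    (fun x hx => ((hd1 x (interior_subset hx)).id_mul).mono interior_subset)
    (fun x hx => ?_) (fun x hx => hconc x (interior_subset hx))
  have hx' := interior_subset hx
  exact (((hd1 x hx').add (hd2 x hx').id_mul).congr_deriv (by ring)).mono interior_subset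

theorem concave_fd_nonneg_general (K : ℝ) (η η' η'' : ℝ → ℝ)
    (hd1 : ∀ k ∈ Set.Icc (0 : ℝ) K, HasDerivWithinAt η (η' k) (Set.Icc (0 : ℝ) K) k)
    (hd2 : ∀ k ∈ Set.Icc (0 : ℝ) K, HasDerivWithinAt η' (η'' k) (Set.Icc (0 : ℝ) K) k)
    (hηK : η K = 0)
    (hconc : ∀ k ∈ Set.Icc (0 : ℝ) K, k * η'' k + 2 * η' k ≤ 0) :
    ∀ k ∈ Set.Icc (0 : ℝ) K, (K - k) * k * η' k + K * η k ≥ 0 := by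
  intro k hk
  rcases hk.2.eq_or_lt with rfl | hkK
  · simp [hηK]
  have hφ := concaveOn_id_mul_of_hasDerivWithinAt (convex_Icc 0 K) hd1 hd2 hconc
  have hchord := hφ.slope_le_of_hasDerivWithinAt hk (right_mem_Icc.2 (hk.1.trans hk.2)) hkK
    (hd1 k hk).id_mul
  rw [slope_def_field, hηK, div_le_iff₀ (sub_pos.2 hkK)] at hchord
  linear_combination hchord

/-- If the flow-density relation is concave (`k·η''(k) + 2·η'(k) ≤ 0`) on `[0,K]`
and `η(K) = 0`, then `(K − k)·k·η'(k) + K·η(k) ≥ 0` on `[0,K]`. -/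
theorem concave_fd_nonneg (K : ℝ) (hK : 0 < K) (η η' η'' : ℝ → ℝ)
    (hd1 : ∀ k ∈ Set.Icc (0 : ℝ) K, HasDerivWithinAt η (η' k) (Set.Icc (0 : ℝ) K) k)
    (hd2 : ∀ k ∈ Set.Icc (0 : ℝ) K, HasDerivWithinAt η' (η'' k) (Set.Icc (0 : ℝ) K) k)
    (hηK : η K = 0)
    (hconc : ∀ k ∈ Set.Icc (0 : ℝ) K, k * η'' k + 2 * η' k ≤ 0) :
    ∀ k ∈ Set.Icc (0 : ℝ) K, (K - k) * k * η' k + K * η k ≥ 0 :=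
  concave_fd_nonneg_general K η η' η'' hd1 hd2 hηK hconc
end

section
/- Let K > 0 and let η : ℝ → ℝ be twice differentiable on [0, K] with η(K) = 0 and k·η''(k) + 2·η'(k) ≤ 0 for all k ∈ [0, K]. Then the function g(k) = k·η(k)/(1 − k/K) is monotone nondecreasing on [0, K), and its supremum over [0, K) equals −η'(K)·K² (which is also its limit as k → K⁻). Consequently, the collision-free condition ΔN/Δt ≥ sup_{k∈[0,K)} k·η(k)/(1 − k/K) is equivalent to ΔN/Δt ≥ −η'(K)·K². -/
/-!
With `φ k = k * η k` and `η K = 0`, the function `g k = φ k / (1 - k / K)` is `-K` times the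
slope of the chord of `φ` from `k` to `K`. The hypothesis says `φ'' ≤ 0`, so `φ` is concave and
this slope decreases in `k`; hence `g` increases, and its supremum is its limit at `K⁻`, namely
`-K * φ'(K) = -K * (K * η' K)`.
-/

open Set Filter Topology

/-- At `k = K` both sides are `0` by the conventions `x / 0 = 0` and `slope f K K = 0`. -/
theorem div_one_sub_div_eq_neg_mul_slope {f : ℝ → ℝ} {K : ℝ} (hfK : f K = 0) (hK : K ≠ 0)
    (k : ℝ) : f k / (1 - k / K) = -K * slope f K k := by
  rcases eq_or_ne k K with rfl | hkK
  · simp [hfK]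
  have hsub : k - K ≠ 0 := sub_ne_zero.2 hkK
  rw [slope_def_field, hfK]
  field_simp
  ring

theorem concaveOn_Icc_of_hasDerivWithinAt2_nonpos {a b : ℝ} {f f' f'' : ℝ → ℝ}
    (hf : ∀ x ∈ Icc a b, HasDerivWithinAt f (f' x) (Icc a b) x)
    (hf' : ∀ x ∈ Ioo a b, HasDerivWithinAt f' (f'' x) (Icc a b) x)
    (hf'' : ∀ x ∈ Ioo a b, f'' x ≤ 0) : ConcaveOn ℝ (Icc a b) f := by
  refine concaveOn_of_hasDerivWithinAt2_nonpos (f' := f') (convex_Icc a b)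
    (fun x hx => (hf x hx).continuousWithinAt) ?_ ?_ (by rwa [interior_Icc]) <;> rw [interior_Icc]
  · exact fun x hx => (hf x (Ioo_subset_Icc_self hx)).mono Ioo_subset_Icc_self
  · exact fun x hx => (hf' x hx).mono Ioo_subset_Icc_self

theorem concaveOn_Icc_id_mul {a b : ℝ} {η η' η'' : ℝ → ℝ}
    (hd1 : ∀ k ∈ Icc a b, HasDerivWithinAt η (η' k) (Icc a b) k)
    (hd2 : ∀ k ∈ Ioo a b, HasDerivWithinAt η' (η'' k) (Icc a b) k)
    (hconc : ∀ k ∈ Ioo a b, k * η'' k + 2 * η' k ≤ 0) :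
    ConcaveOn ℝ (Icc a b) fun k => k * η k := by
  refine concaveOn_Icc_of_hasDerivWithinAt2_nonpos (f' := fun k => η k + k * η' k)
    (f'' := fun k => k * η'' k + 2 * η' k) (fun k hk => ?_) (fun k hk => ?_) hconc
  · exact ((hasDerivWithinAt_id k _).mul (hd1 k hk)).congr_deriv (by simp)
  · exact ((hd1 k (Ioo_subset_Icc_self hk)).add
      ((hasDerivWithinAt_id k _).mul (hd2 k hk))).congr_deriv (by simp; ring)

theorem tendsto_slope_nhdsLT_of_hasDerivWithinAt_Icc {f : ℝ → ℝ} {a b f' : ℝ} (hab : a < b)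
    (hf : HasDerivWithinAt f f' (Icc a b) b) : Tendsto (slope f b) (𝓝[<] b) (𝓝 f') := by
  rw [← nhdsWithin_Ioo_eq_nhdsLT hab]
  refine (hasDerivWithinAt_iff_tendsto_slope.1 hf).mono_left (nhdsWithin_mono b ?_)
  exact fun x hx => ⟨Ioo_subset_Icc_self hx, hx.2.ne⟩

theorem collision_free_condition_concave_general (K ΔN Δt : ℝ) (hK : 0 < K)
    (η η' η'' : ℝ → ℝ)
    (hd1 : ∀ k ∈ Set.Icc (0 : ℝ) K, HasDerivWithinAt η (η' k) (Set.Icc (0 : ℝ) K) k)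
    (hd2 : ∀ k ∈ Set.Icc (0 : ℝ) K, HasDerivWithinAt η' (η'' k) (Set.Icc (0 : ℝ) K) k)
    (hηK : η K = 0)
    (hconc : ∀ k ∈ Set.Icc (0 : ℝ) K, k * η'' k + 2 * η' k ≤ 0) :
    MonotoneOn (fun k => k * η k / (1 - k / K)) (Set.Ico (0 : ℝ) K) ∧
    sSup ((fun k => k * η k / (1 - k / K)) '' Set.Ico (0 : ℝ) K) = -η' K * K ^ 2 ∧
    Filter.Tendsto (fun k => k * η k / (1 - k / K)) (nhdsWithin K (Set.Iio K))
      (nhds (-η' K * K ^ 2)) ∧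
    (ΔN / Δt ≥ sSup ((fun k => k * η k / (1 - k / K)) '' Set.Ico (0 : ℝ) K) ↔
      ΔN / Δt ≥ -η' K * K ^ 2) := by
  set φ : ℝ → ℝ := fun k => k * η k
  have hKmem : K ∈ Icc 0 K := right_mem_Icc.2 hK.le
  have hconcave : ConcaveOn ℝ (Icc 0 K) φ := concaveOn_Icc_id_mul hd1
    (fun k hk => hd2 k (Ioo_subset_Icc_self hk)) (fun k hk => hconc k (Ioo_subset_Icc_self hk))
  have hφ' : HasDerivWithinAt φ (K * η' K) (Icc 0 K) K :=
    ((hasDerivWithinAt_id K _).mul (hd1 K hKmem)).congr_deriv (by simp [hηK])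
  have hg : (fun k => k * η k / (1 - k / K)) = fun k => -K * slope φ K k :=
    funext (div_one_sub_div_eq_neg_mul_slope (by simp [hηK]) hK.ne')
  have hanti : AntitoneOn (slope φ K) (Ico 0 K) :=
    (hconcave.slope_anti hKmem).mono fun k hk => ⟨Ico_subset_Icc_self hk, hk.2.ne⟩
  have hmono : MonotoneOn (fun k => k * η k / (1 - k / K)) (Ico 0 K) := by
    rw [hg]
    exact fun a ha b hb hab => mul_le_mul_of_nonpos_left (hanti ha hb hab) (by linarith)
  have hlim : Tendsto (fun k => k * η k / (1 - k / K)) (𝓝[<] K) (𝓝 (-η' K * K ^ 2)) := by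
    rw [hg]
    convert (tendsto_slope_nhdsLT_of_hasDerivWithinAt_Icc hK hφ').const_mul (-K) using 2
    ring
  have hsup : sSup ((fun k => k * η k / (1 - k / K)) '' Ico 0 K) = -η' K * K ^ 2 :=
    ((isLUB_Ico hK).isLUB_of_tendsto hmono (nonempty_Ico.2 hK)
      (hlim.mono_left (nhdsWithin_mono K Ico_subset_Iio_self))).csSup_eq
      ((nonempty_Ico.2 hK).image _)
  exact ⟨hmono, hsup, hlim, by rw [hsup]⟩

/-- For a concave fundamental diagram, `g(k) = k·η(k)/(1 − k/K)` is nondecreasing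
on `[0,K)`, its supremum over `[0,K)` is `−η'(K)·K²` (which is also its limit as
`k → K⁻`), and hence the collision-free condition `ΔN/Δt ≥ sup g` is equivalent to
`ΔN/Δt ≥ −η'(K)·K²`. -/
theorem collision_free_condition_concave (K ΔN Δt : ℝ) (hK : 0 < K)
    (hΔN : 0 < ΔN) (hΔt : 0 < Δt) (η η' η'' : ℝ → ℝ)
    (hd1 : ∀ k ∈ Set.Icc (0 : ℝ) K, HasDerivWithinAt η (η' k) (Set.Icc (0 : ℝ) K) k)
    (hd2 : ∀ k ∈ Set.Icc (0 : ℝ) K, HasDerivWithinAt η' (η'' k) (Set.Icc (0 : ℝ) K) k)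
    (hηK : η K = 0)
    (hconc : ∀ k ∈ Set.Icc (0 : ℝ) K, k * η'' k + 2 * η' k ≤ 0) :
    MonotoneOn (fun k => k * η k / (1 - k / K)) (Set.Ico (0 : ℝ) K) ∧
    sSup ((fun k => k * η k / (1 - k / K)) '' Set.Ico (0 : ℝ) K) = -η' K * K ^ 2 ∧
    Filter.Tendsto (fun k => k * η k / (1 - k / K)) (nhdsWithin K (Set.Iio K))
      (nhds (-η' K * K ^ 2)) ∧
    (ΔN / Δt ≥ sSup ((fun k => k * η k / (1 - k / K)) '' Set.Ico (0 : ℝ) K) ↔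
      ΔN / Δt ≥ -η' K * K ^ 2) :=
  collision_free_condition_concave_general K ΔN Δt hK η η' η'' hd1 hd2 hηK hconc
end

section
/- Let V, W, K > 0 and let η(k) = min{V, W·(K/k − 1)} be the triangular speed-density relation on (0, K]. Then for every k ∈ (0, K), k·η(k)/(1 − k/K) ≤ W·K, with equality for all k ∈ [W·K/(V+W), K); hence sup_{k∈(0,K)} k·η(k)/(1 − k/K) = W·K. Consequently, for the triangular fundamental diagram the collision-free condition is equivalent to ΔN/Δt ≥ W·K. -/
/-!
On the congested branch `η(k) = W(K/k − 1)` the quantity `k·η(k)/(1 − k/K)` is identically `W·K`,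
and since `η(k)` never exceeds the congested branch, `W·K` bounds it on all of `(0, K)`. The bound
is attained at the critical density `WK/(V+W) ∈ (0, K)`, so it is the supremum, indeed a maximum.
-/

namespace TriangularDiagram

variable {V W K k : ℝ}

theorem congested_flow_div_eq (hk : k ≠ 0) (hK : K ≠ 0) (hkK : k ≠ K) :
    k * (W * (K / k - 1)) / (1 - k / K) = W * K := by
  have hden : 1 - k / K ≠ 0 := by
    rw [sub_ne_zero, ne_comm, ne_eq, div_eq_one_iff_eq hK]
    exact hkK
  rw [div_eq_iff hden]
  field_simp

theorem flow_div_le (hk : k ∈ Set.Ioo 0 K) :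
    k * min V (W * (K / k - 1)) / (1 - k / K) ≤ W * K := by
  obtain ⟨hk0, hkK⟩ := hk
  have hden : 0 ≤ 1 - k / K := by
    rw [sub_nonneg, div_le_one (hk0.trans hkK)]
    exact hkK.le
  calc k * min V (W * (K / k - 1)) / (1 - k / K)
      ≤ k * (W * (K / k - 1)) / (1 - k / K) := by gcongr; exact min_le_right _ _
    _ = W * K := congested_flow_div_eq hk0.ne' (hk0.trans hkK).ne' hkK.ne

theorem min_eq_congested (hVW : 0 < V + W) (hk : 0 < k) (hck : W * K / (V + W) ≤ k) :
    min V (W * (K / k - 1)) = W * (K / k - 1) := by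
  rw [div_le_iff₀ hVW] at hck
  refine min_eq_right ?_
  rw [mul_sub, mul_one, mul_div_assoc', sub_le_iff_le_add, div_le_iff₀ hk]
  linarith

theorem flow_div_eq_of_congested (hV : 0 < V) (hW : 0 < W) (hK : 0 < K)
    (hk : k ∈ Set.Ico (W * K / (V + W)) K) :
    k * min V (W * (K / k - 1)) / (1 - k / K) = W * K := by
  obtain ⟨hck, hkK⟩ := hk
  have hk0 : 0 < k := lt_of_lt_of_le (by positivity) hck
  rw [min_eq_congested (by positivity) hk0 hck]
  exact congested_flow_div_eq hk0.ne' hK.ne' hkK.ne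

theorem criticalDensity_lt (hV : 0 < V) (hW : 0 < W) (hK : 0 < K) :
    W * K / (V + W) < K := by
  rw [div_lt_iff₀ (by positivity)]
  nlinarith

end TriangularDiagram

open TriangularDiagram in
theorem triangular_collision_free_general (V W K ΔN Δt : ℝ) (hV : 0 < V) (hW : 0 < W)
    (hK : 0 < K) (η : ℝ → ℝ)
    (hη : ∀ k ∈ Set.Ioc (0 : ℝ) K, η k = min V (W * (K / k - 1))) :
    (∀ k ∈ Set.Ioo (0 : ℝ) K, k * η k / (1 - k / K) ≤ W * K) ∧
    (∀ k ∈ Set.Ico (W * K / (V + W)) K, k * η k / (1 - k / K) = W * K) ∧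
    sSup ((fun k => k * η k / (1 - k / K)) '' Set.Ioo (0 : ℝ) K) = W * K ∧
    (ΔN / Δt ≥ sSup ((fun k => k * η k / (1 - k / K)) '' Set.Ioo (0 : ℝ) K) ↔
      ΔN / Δt ≥ W * K) := by
  have hc0 : 0 < W * K / (V + W) := by positivity
  have hcK := criticalDensity_lt hV hW hK
  have hle : ∀ k ∈ Set.Ioo (0 : ℝ) K, k * η k / (1 - k / K) ≤ W * K := fun k hk => by
    rw [hη k (Set.Ioo_subset_Ioc_self hk)]
    exact flow_div_le hk
  have heq : ∀ k ∈ Set.Ico (W * K / (V + W)) K, k * η k / (1 - k / K) = W * K := fun k hk => by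
    rw [hη k ⟨hc0.trans_le hk.1, hk.2.le⟩]
    exact flow_div_eq_of_congested hV hW hK hk
  have hsup : sSup ((fun k => k * η k / (1 - k / K)) '' Set.Ioo (0 : ℝ) K) = W * K :=
    IsGreatest.csSup_eq
      ⟨⟨_, ⟨hc0, hcK⟩, heq _ ⟨le_rfl, hcK⟩⟩, Set.forall_mem_image.mpr hle⟩
  exact ⟨hle, heq, hsup, by rw [hsup]⟩

/-- Triangular fundamental diagram `η(k) = min{V, W(K/k − 1)}`:
`k·η(k)/(1 − k/K) ≤ W·K` on `(0,K)`, with equality on `[WK/(V+W), K)`; hence the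
supremum is `W·K`, and the collision-free condition is equivalent to `ΔN/Δt ≥ W·K`. -/
theorem triangular_collision_free (V W K ΔN Δt : ℝ) (hV : 0 < V) (hW : 0 < W)
    (hK : 0 < K) (hΔN : 0 < ΔN) (hΔt : 0 < Δt) (η : ℝ → ℝ)
    (hη : ∀ k ∈ Set.Ioc (0 : ℝ) K, η k = min V (W * (K / k - 1))) :
    (∀ k ∈ Set.Ioo (0 : ℝ) K, k * η k / (1 - k / K) ≤ W * K) ∧
    (∀ k ∈ Set.Ico (W * K / (V + W)) K, k * η k / (1 - k / K) = W * K) ∧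
    sSup ((fun k => k * η k / (1 - k / K)) '' Set.Ioo (0 : ℝ) K) = W * K ∧
    (ΔN / Δt ≥ sSup ((fun k => k * η k / (1 - k / K)) '' Set.Ioo (0 : ℝ) K) ↔
      ΔN / Δt ≥ W * K) :=
  triangular_collision_free_general V W K ΔN Δt hV hW hK η hη
end

section
/- Let S > 0, Δt > 0, ΔN > 0, and let θ : ℝ → ℝ satisfy θ(s) > 0 for every s > S. Consider three vehicles with positions x0 > x1 > x2 at time t such that x0 − x1 = S·ΔN (vehicle 1 is at exactly the jam spacing behind the stopped leader, vehicle 0) and x1 − x2 > S·ΔN. If vehicle 1's position is updated by the forward-difference (non-anisotropic) rule y1 = x1 + Δt·θ((x1 − x2)/ΔN) while the stopped leader keeps y0 = x0, then y0 − y1 < S·ΔN. That is, the time-discrete car-following model with forward-difference (or any) discretization that makes a vehicle's speed depend on its follower's spacing is not collision-free, even though no collision exists at time t. -/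
/-- Non-anisotropic (forward-difference) discretization is not collision-free:
if vehicle 1 is exactly at the jam spacing behind the stopped leader (vehicle 0)
and its own follower (vehicle 2) is farther than the jam spacing behind it, then
after the forward-difference update vehicle 1 ends up closer to the leader than
the jam spacing. -/
theorem forward_difference_not_collision_free (S Δt ΔN : ℝ) (hS : 0 < S)
    (hΔt : 0 < Δt) (hΔN : 0 < ΔN) (θ : ℝ → ℝ) (hθ : ∀ s : ℝ, S < s → 0 < θ s)
    (x0 x1 x2 : ℝ) (h01 : x1 < x0) (h12 : x2 < x1)
    (hjam : x0 - x1 = S * ΔN) (hgap : x1 - x2 > S * ΔN) :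
    x0 - (x1 + Δt * θ ((x1 - x2) / ΔN)) < S * ΔN := by
  have hs : S < (x1 - x2) / ΔN := (lt_div_iff₀ hΔN).mpr hgap
  have hpos : 0 < Δt * θ ((x1 - x2) / ΔN) := mul_pos hΔt (hθ _ hs)
  linarith
end

section
/- Let S > 0, Δt > 0, ΔN > 0, and let θ : ℝ → ℝ satisfy θ(s) > 0 for every s > S. Consider a leader (vehicle 0) stopped at position x0 at both times t − Δt and t, and a follower (vehicle 1) with positions x1' at time t − Δt and x1 at time t, such that x0 − x1 = S·ΔN and x0 − x1' > S·ΔN. If vehicle 1's position is updated with the fully explicit Euler scheme y1 = x1 + Δt·θ((x0 − x1')/ΔN), then x0 − y1 < S·ΔN. That is, the car-following model obtained by discretizing both the acceleration rate and the speed with the explicit Euler method (instead of the symplectic Euler method) is not collision-free. -/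
/-- The fully explicit Euler discretization is not collision-free: a leader stopped
at `x0` at both times `t − Δt` and `t`, and a follower at exactly the jam spacing
at time `t` but strictly farther at time `t − Δt`, ends up closer than the jam
spacing after the explicit Euler update, which uses the spacing from time `t − Δt`. -/
theorem explicit_euler_not_collision_free (S Δt ΔN : ℝ) (hS : 0 < S)
    (hΔt : 0 < Δt) (hΔN : 0 < ΔN) (θ : ℝ → ℝ) (hθ : ∀ s : ℝ, S < s → 0 < θ s)
    (x0 x1 x1' : ℝ) (hjam : x0 - x1 = S * ΔN) (hprev : x0 - x1' > S * ΔN) :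
    x0 - (x1 + Δt * θ ((x0 - x1') / ΔN)) < S * ΔN := by
  have hpos : 0 < θ ((x0 - x1') / ΔN) := by
    apply hθ
    rw [lt_div_iff₀ hΔN]
    linarith
  nlinarith
end

section
/- Let K > 0, S = 1/K, and let η : ℝ → ℝ satisfy η(k) ≥ 0 for all k ∈ (0, K] and η(K) = 0. Let Δt, ΔN > 0 satisfy the collision-free condition: k·η(k) ≤ (ΔN/Δt)·(1 − k/K) for all k ∈ (0, K). Suppose vehicle positions x : ℕ → ℝ satisfy x(n−1) − x(n) ≥ S·ΔN for all n ≥ 1, and let v, A : ℕ → ℝ be arbitrary (current speeds and acceleration rates of any underlying second-order model). Define the first-corrected update for n ≥ 1 by w(n) = max{0, min{η(ΔN/(x(n−1) − x(n))), v(n) + Δt·A(n)}} and y(n) = max{x(n), min{x(n) + Δt·η(ΔN/(x(n−1) − x(n))), x(n) + Δt·v(n) + Δt²·A(n)}}, with the lead vehicle satisfying y(0) ≥ x(0). Then w(n) ≥ 0 for all n ≥ 1 (forward-traveling) and y(n−1) − y(n) ≥ S·ΔN for all n ≥ 1 (collision-free). -/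
/-- The first correction method for a general second-order model is
forward-traveling and collision-free under the collision-free condition
`k·η(k) ≤ (ΔN/Δt)(1 − k/K)` on `(0,K)`. -/
theorem first_correction_forward_collision_free (K S ΔN Δt : ℝ) (hK : 0 < K)
    (hS : S = 1 / K) (hΔN : 0 < ΔN) (hΔt : 0 < Δt) (η : ℝ → ℝ)
    (hη : ∀ k ∈ Set.Ioc (0 : ℝ) K, 0 ≤ η k) (hηK : η K = 0)
    (hcf : ∀ k ∈ Set.Ioo (0 : ℝ) K, k * η k ≤ (ΔN / Δt) * (1 - k / K))
    (x v A w y : ℕ → ℝ)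
    (hx : ∀ n : ℕ, 1 ≤ n → x (n - 1) - x n ≥ S * ΔN)
    (hw : ∀ n : ℕ, 1 ≤ n →
      w n = max 0 (min (η (ΔN / (x (n - 1) - x n))) (v n + Δt * A n)))
    (hy : ∀ n : ℕ, 1 ≤ n →
      y n = max (x n) (min (x n + Δt * η (ΔN / (x (n - 1) - x n)))
        (x n + Δt * v n + Δt ^ 2 * A n)))
    (hy0 : y 0 ≥ x 0) :
    (∀ n : ℕ, 1 ≤ n → 0 ≤ w n) ∧ (∀ n : ℕ, 1 ≤ n → y (n - 1) - y n ≥ S * ΔN) := by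
  constructor
  · intro n hn
    rw [hw n hn]
    exact le_max_left 0 _
  · intro n hn
    set d := x (n - 1) - x n with hdef
    have hd : d ≥ S * ΔN := hx n hn
    have hSpos : 0 < S * ΔN := by
      rw [hS]; positivity
    have hdpos : 0 < d := lt_of_lt_of_le hSpos hd
    set k := ΔN / d with hk
    have hkpos : 0 < k := div_pos hΔN hdpos
    have hkK : k ≤ K := by
      rw [hk, div_le_iff₀ hdpos]
      have : K * (S * ΔN) = ΔN := by
        rw [hS]; field_simp
      calc ΔN = K * (S * ΔN) := this.symm
        _ ≤ K * d := by nlinarith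
    have hηk : 0 ≤ η k := hη k ⟨hkpos, hkK⟩
    -- key: d - Δt * η k ≥ S * ΔN
    have hkey : d - Δt * η k ≥ S * ΔN := by
      rcases eq_or_lt_of_le hkK with heq | hlt
      · rw [heq, hηK]
        have : d = S * ΔN := by
          rw [hS]
          have : ΔN / d = K := by rw [← heq]
          field_simp at this ⊢
          linarith [this]
        simp [this]
      · have hcfk := hcf k ⟨hkpos, hlt⟩
        have hdk : d = ΔN / k := by
          rw [hk]; field_simp
        have h1 : Δt * η k ≤ ΔN * (1 - k / K) / k := by
          rw [le_div_iff₀ hkpos]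
          calc Δt * η k * k = (k * η k) * Δt := by ring
            _ ≤ (ΔN / Δt * (1 - k / K)) * Δt := by
                have h1k : (0:ℝ) ≤ 1 - k / K := by
                  have : k / K < 1 := by rw [div_lt_one hK]; exact hlt
                  linarith
                nlinarith [hcf k ⟨hkpos, hlt⟩]
            _ = ΔN * (1 - k / K) := by field_simp
        have h2 : ΔN * (1 - k / K) / k = d - S * ΔN := by
          rw [hdk, hS]
          field_simp
        linarith [h1, h2 ▸ h1]
    -- y n ≤ x n + Δt * η k
    have hyn : y n ≤ x n + Δt * η k := by
      rw [hy n hn]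
      apply max_le
      · nlinarith
      · exact le_trans (min_le_left _ _) (le_refl _)
    -- y (n-1) ≥ x (n-1)
    have hyn1 : y (n - 1) ≥ x (n - 1) := by
      rcases Nat.lt_or_ge n 2 with h2 | h2
      · interval_cases n
        simpa using hy0
      · have h1 : 1 ≤ n - 1 := by omega
        rw [hy (n - 1) h1]
        exact le_max_left _ _
    have : y (n - 1) - y n ≥ x (n - 1) - (x n + Δt * η k) := by linarith
    have : x (n - 1) - (x n + Δt * η k) = d - Δt * η k := by
      rw [hdef]; ring
    linarith [hyn1, hyn, hkey]
end

section
/- Let S > 0 and Δt, ΔN > 0 be arbitrary. Suppose vehicle positions x : ℕ → ℝ satisfy x(n−1) − x(n) ≥ S·ΔN for all n ≥ 1, and let v, A : ℕ → ℝ be arbitrary. Define the second-corrected update for n ≥ 1 by w(n) = max{0, min{(x(n−1) − x(n) − S·ΔN)/Δt, v(n) + Δt·A(n)}} and y(n) = max{x(n), min{x(n−1) − S·ΔN, x(n) + Δt·v(n) + Δt²·A(n)}}, with the lead vehicle satisfying y(0) ≥ x(0). Then w(n) ≥ 0 for all n ≥ 1 (forward-traveling) and y(n−1) − y(n) ≥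 S·ΔN for all n ≥ 1 (collision-free). In particular, the second correction method is forward-traveling and collision-free for any time step Δt and vehicle step ΔN. -/
/-- The second correction method for a general second-order model is
forward-traveling and collision-free for any time step `Δt` and vehicle step `ΔN`. -/
theorem second_correction_forward_collision_free (S ΔN Δt : ℝ) (hS : 0 < S)
    (hΔN : 0 < ΔN) (hΔt : 0 < Δt)
    (x v A w y : ℕ → ℝ)
    (hx : ∀ n : ℕ, 1 ≤ n → x (n - 1) - x n ≥ S * ΔN)
    (hw : ∀ n : ℕ, 1 ≤ n →
      w n = max 0 (min ((x (n - 1) - x n - S * ΔN) / Δt) (v n + Δt * A n)))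
    (hy : ∀ n : ℕ, 1 ≤ n →
      y n = max (x n) (min (x (n - 1) - S * ΔN) (x n + Δt * v n + Δt ^ 2 * A n)))
    (hy0 : y 0 ≥ x 0) :
    (∀ n : ℕ, 1 ≤ n → 0 ≤ w n) ∧ (∀ n : ℕ, 1 ≤ n → y (n - 1) - y n ≥ S * ΔN) := by
  have hyx : ∀ n : ℕ, y n ≥ x n := by
    intro n
    rcases Nat.eq_zero_or_pos n with h | h
    · simpa [h] using hy0
    · rw [hy n h]; exact le_max_left _ _
  have hyub : ∀ n : ℕ, 1 ≤ n → y n ≤ x (n - 1) - S * ΔN := by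
    intro n h
    rw [hy n h]
    have h1 : x n ≤ x (n - 1) - S * ΔN := by linarith [hx n h]
    exact max_le h1 (min_le_left _ _)
  refine ⟨fun n h => by rw [hw n h]; exact le_max_left _ _, fun n h => ?_⟩
  have := hyub n h
  have := hyx (n - 1)
  linarith
end

section
/- Let K > 0, S = 1/K, and let η : ℝ → ℝ satisfy η(K) = 0 and the collision-free condition for Δt, ΔN > 0: k·η(k) ≤ (ΔN/Δt)·(1 − k/K) for all k ∈ (0, K). Then for every spacing s ≥ S·ΔN (with k = ΔN/s ∈ (0, K]), one has (s − S·ΔN)/Δt ≥ η(ΔN/s). Consequently, the speed bound used by the second correction method, (s − S·ΔN)/Δt, is greater than or equal to the speed bound used by the first correction method, η(ΔN/s), so under the collision-free condition the speed produced by the second correction method is always at least that produced by the first correction method. -/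
/-- Under the collision-free condition, the speed bound of the second correction
method dominates that of the first: for every spacing `s ≥ S·ΔN`,
`(s − S·ΔN)/Δt ≥ η(ΔN/s)`. -/
theorem second_correction_bound_ge_first (K S ΔN Δt : ℝ) (hK : 0 < K)
    (hS : S = 1 / K) (hΔN : 0 < ΔN) (hΔt : 0 < Δt) (η : ℝ → ℝ) (hηK : η K = 0)
    (hcf : ∀ k ∈ Set.Ioo (0 : ℝ) K, k * η k ≤ (ΔN / Δt) * (1 - k / K)) :
    ∀ s : ℝ, s ≥ S * ΔN → (s - S * ΔN) / Δt ≥ η (ΔN / s) := by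
  intro s hs
  have hSpos : 0 < S := by rw [hS]; positivity
  have hspos : 0 < s := lt_of_lt_of_le (by positivity) hs
  set k := ΔN / s with hk
  have hkpos : 0 < k := by positivity
  rcases eq_or_lt_of_le hs with heq | hlt
  · have hsk : k = K := by
      rw [hk, ← heq, hS]
      field_simp
    rw [hsk, hηK]
    have : s - S * ΔN = 0 := by rw [← heq]; ring
    rw [this]
    simp
  · have hkK : k < K := by
      rw [hk, div_lt_iff₀ hspos]
      calc ΔN = K * (S * ΔN) := by rw [hS]; field_simp
        _ < K * s := by exact mul_lt_mul_of_pos_left hlt hK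
    have h := hcf k ⟨hkpos, hkK⟩
    -- divide by k
    have key : η k ≤ (ΔN / Δt) * (1 - k / K) / k := by
      rw [le_div_iff₀ hkpos]
      linarith [h]
    have : (ΔN / Δt) * (1 - k / K) / k = (s - S * ΔN) / Δt := by
      rw [hk, hS]
      field_simp
    rw [this] at key
    exact key
end
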